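/- Let b : ℝ → ℓ²(ℤ; ℂ) be a continuously differentiable solution of the Toy Model System on ℓ²(ℤ), let I ⊆ ℤ, and suppose that at some time t₀ one has b_j(t₀) = 0 for all j ∉ I. Then b_j(t) = 0 for all j ∉ I and all t ∈ ℝ; that is, the support of a solution is constant in time. -/

import Mathlib

open scoped BigOperators ENNReal

noncomputable section

/-- The right-hand side of the Toy Model System on `ℓ²(ℤ)`:
`−i|b_j|² b_j + 2i conj(b_j)(b_{j−1}² + b_{j+1}²)`. -/
def toyRHSZ (b : ℤ → ℂ) (j : ℤ) : ℂ :=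
  -Complex.I * (‖b j‖ : ℂ) ^ 2 * b j +
    2 * Complex.I * (starRingEnd ℂ) (b j) * (b (j - 1) ^ 2 + b (j + 1) ^ 2)

/-- `b : ℝ → ℓ²(ℤ;ℂ)` is a continuously differentiable global solution of the
Toy Model System. -/
def IsToyL2Sol (b : ℝ → lp (fun _ : ℤ => ℂ) 2) : Prop :=
  ∃ b' : ℝ → lp (fun _ : ℤ => ℂ) 2,
    Continuous b' ∧
    (∀ t : ℝ, HasDerivAt b (b' t) t) ∧
    (∀ (t : ℝ) (j : ℤ), (b' t) j = toyRHSZ (⇑(b t)) j)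

/-! Each coordinate of a solution obeys `|b_j'| ≤ K(t) |b_j|` with `K(t) = 5‖b(t)‖²` continuous,
because every term of the right-hand side carries a factor `b_j` or `conj b_j`. A vanishing
coordinate therefore stays zero forwards in time by Grönwall's inequality, and backwards by
applying the same argument to `t ↦ b(-t)`. -/

open Set

lemma norm_toyRHSZ_le (x : lp (fun _ : ℤ => ℂ) 2) (j : ℤ) :
    ‖toyRHSZ x j‖ ≤ 5 * ‖x‖ ^ 2 * ‖x j‖ := by
  have hcoord (i : ℤ) : ‖x i‖ ≤ ‖x‖ := lp.norm_apply_le_norm two_ne_zero x i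
  calc ‖toyRHSZ x j‖
      ≤ ‖x j‖ ^ 2 * ‖x j‖ + 2 * ‖x j‖ * (‖x (j - 1)‖ ^ 2 + ‖x (j + 1)‖ ^ 2) := by
        refine (norm_add_le _ _).trans (add_le_add (le_of_eq ?_) ?_)
        · simp
        · simp only [norm_mul, Complex.norm_two, Complex.norm_I, mul_one, Complex.norm_conj]
          gcongr
          exact (norm_add_le _ _).trans_eq (by simp only [norm_pow])
    _ ≤ ‖x‖ ^ 2 * ‖x j‖ + 2 * ‖x j‖ * (‖x‖ ^ 2 + ‖x‖ ^ 2) := by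
        gcongr <;> apply hcoord
    _ = 5 * ‖x‖ ^ 2 * ‖x j‖ := by ring

section Uniqueness

variable {E : Type*} [NormedAddCommGroup E] [NormedSpace ℝ E] {g g' : ℝ → E} {K : ℝ → ℝ}
  {a : ℝ}

lemma eq_zero_of_norm_deriv_le_mul_norm_of_le (hg : ∀ t, HasDerivAt g (g' t) t)
    (hK : Continuous K) (hbound : ∀ t, ‖g' t‖ ≤ K t * ‖g t‖) (ha : g a = 0) {t : ℝ}
    (hat : a ≤ t) : g t = 0 := by
  obtain ⟨C, hC⟩ := isCompact_Icc.exists_bound_of_continuousOn (hK.continuousOn (s := Icc a t))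
  refine eq_zero_of_abs_deriv_le_mul_abs_self_of_eq_zero_right (K := C)
    (fun s _ => (hg s).continuousAt.continuousWithinAt) (fun s _ => (hg s).hasDerivWithinAt) ha
    (fun s hs => (hbound s).trans ?_) t (right_mem_Icc.2 hat)
  gcongr
  exact (le_abs_self _).trans (hC s (Ico_subset_Icc_self hs))

lemma eq_zero_of_norm_deriv_le_mul_norm (hg : ∀ t, HasDerivAt g (g' t) t)
    (hK : Continuous K) (hbound : ∀ t, ‖g' t‖ ≤ K t * ‖g t‖) (ha : g a = 0) (t : ℝ) :
    g t = 0 := by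
  rcases le_total a t with hat | hta
  · exact eq_zero_of_norm_deriv_le_mul_norm_of_le hg hK hbound ha hat
  · have hg_neg (s : ℝ) : HasDerivAt (fun u => g (-u)) (-g' (-s)) s := by
      simpa [Function.comp_def] using (hg (-s)).scomp s (hasDerivAt_neg s)
    simpa using eq_zero_of_norm_deriv_le_mul_norm_of_le hg_neg (hK.comp continuous_neg)
      (fun s => by simpa using hbound (-s)) (a := -a) (by simpa using ha) (neg_le_neg hta)

end Uniqueness

/-- The support of a solution of the Toy Model System on `ℓ²(ℤ)` is constant in time:
if the solution vanishes outside `I` at one time, it does so at all times. -/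
theorem stmt8 (b : ℝ → lp (fun _ : ℤ => ℂ) 2) (hb : IsToyL2Sol b)
    (I : Set ℤ) (t₀ : ℝ) (h0 : ∀ j ∉ I, (b t₀) j = 0) :
    ∀ (t : ℝ), ∀ j ∉ I, (b t) j = 0 := by
  obtain ⟨b', -, hderiv, hrhs⟩ := hb
  intro t j hj
  have hb_cont : Continuous b := continuous_iff_continuousAt.2 fun s => (hderiv s).continuousAt
  refine eq_zero_of_norm_deriv_le_mul_norm (g := fun s => b s j) (g' := fun s => b' s j)
    (K := fun s => 5 * ‖b s‖ ^ 2) (fun s => ?_) (by fun_prop) (fun s => ?_) (h0 j hj) t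
  · exact (lp.evalCLM ℝ _ 2 j).hasFDerivAt.comp_hasDerivAt s (hderiv s)
  · rw [hrhs]
    exact norm_toyRHSZ_le (b s) j
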